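/- Let A be an associative k-algebra. Then QSh(A) := ⊕_{n≥0} A^{⊗n}, equipped with the quasi-shuffle product ⧢ and the deconcatenation coproduct Δ, is a conilpotent unital bialgebra (hence a Hopf algebra): ⧢ is associative with unit the empty word 1, Δ is coassociative with counit η annihilating words of positive length, Δ is an algebra morphism for ⧢, and the reduced coproduct is locally conilpotent. Moreover, if A is commutative, then ⧢ is commutative. -/

import Mathlib

/-
Every identity to prove is multilinear and the words span `QSh(A)`, so it suffices to check it
on words. There, the recursions defining `⧢` and `Δ` express each identity for words of total
length `n` through instances of smaller total length. For `Δ(u ⧢ v) = Δu ⧢ Δv` the key point is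
that the quasi-shuffle recursion also holds for `⧢ ⊗ ⧢` when letters are prepended to the
first tensor factor. For conilpotency: `Δ'` of a nonempty word is the sum of its splittings into
two nonempty words, so the iterated reduced coproduct of the right order kills it, and the
kernel of the counit is spanned by the nonempty words.
-/

open scoped TensorProduct
open TensorProduct

noncomputable section

namespace QShPaper

variable (k : Type*) [Field k]

/-! ### Convolution algebra of linear maps from a coalgebra to an algebra -/

section Conv

variable {Q : Type*} [AddCommGroup Q] [Module k Q]
variable (A : Type*) [Ring A] [Algebra k A]

/-- The convolution product `f * g := m_A ∘ (f ⊗ g) ∘ Δ` associated to a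
comultiplication `com` on `Q`. -/
def conv (com : Q →ₗ[k] Q ⊗[k] Q) (f g : Q →ₗ[k] A) : Q →ₗ[k] A :=
  LinearMap.mul' k A ∘ₗ TensorProduct.map f g ∘ₗ com

/-- The unit `u_A ∘ η` of the convolution product. -/
def convUnit (cou : Q →ₗ[k] k) : Q →ₗ[k] A := Algebra.linearMap k A ∘ₗ cou

/-- Convolution powers `f^{*n}`, with `f^{*0}` the convolution unit. -/
def convPow (com : Q →ₗ[k] Q ⊗[k] Q) (cou : Q →ₗ[k] k) (f : Q →ₗ[k] A) : ℕ → (Q →ₗ[k] A)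
  | 0 => convUnit k A cou
  | n + 1 => conv k A com f (convPow com cou f n)

end Conv

/-! ### Iterated (reduced) coproducts, conilpotency -/

section Red

variable {Q : Type*} [AddCommGroup Q] [Module k Q]

/-- `Q ≃ Q^{⊗1}`. -/
def toPow1 : Q ≃ₗ[k] ⨂[k]^1 Q := (PiTensorProduct.subsingletonEquiv (R := k) (s := fun _ : Fin 1 => Q) (0 : Fin 1)).symm

variable (one : Q) (com : Q →ₗ[k] Q ⊗[k] Q)

/-- The reduced coproduct `Δ'(h) := Δ(h) − 1 ⊗ h − h ⊗ 1`. -/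
def redComul : Q →ₗ[k] Q ⊗[k] Q :=
  com - TensorProduct.mk k Q Q one - (TensorProduct.mk k Q Q).flip one

/-- Iterated reduced coproducts: `redIter n = Δ'^{[n+1]} : Q → Q^{⊗(n+1)}`,
with `Δ'^{[1]} = Id` and `Δ'^{[n+1]} = (Id ⊗ Δ'^{[n]}) ∘ Δ'`. -/
def redIter : (n : ℕ) → Q →ₗ[k] ⨂[k]^(n+1) Q
  | 0 => (toPow1 k).toLinearMap
  | n + 1 =>
      (TensorPower.cast k Q (show 1 + (n+1) = n+1+1 by omega)).toLinearMap ∘ₗ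
        (TensorPower.mulEquiv (R := k) (M := Q) (n := 1) (m := n+1)).toLinearMap ∘ₗ
          TensorProduct.map (toPow1 k).toLinearMap (redIter n) ∘ₗ redComul k one com

/-- Iterated coproducts: `fullIter n = Δ^{[n+1]} : Q → Q^{⊗(n+1)}`,
with `Δ^{[1]} = Id` and `Δ^{[n+1]} = (Id ⊗ Δ^{[n]}) ∘ Δ`. -/
def fullIter : (n : ℕ) → Q →ₗ[k] ⨂[k]^(n+1) Q
  | 0 => (toPow1 k).toLinearMap
  | n + 1 =>
      (TensorPower.cast k Q (show 1 + (n+1) = n+1+1 by omega)).toLinearMap ∘ₗ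
        (TensorPower.mulEquiv (R := k) (M := Q) (n := 1) (m := n+1)).toLinearMap ∘ₗ
          TensorProduct.map (toPow1 k).toLinearMap (fullIter n) ∘ₗ com

/-- A (coaugmented) coalgebra is (locally) conilpotent if every element of the kernel of
the counit. is annihilated by some iterated reduced coproduct. -/
def IsConilpotent (cou : Q →ₗ[k] k) : Prop :=
  ∀ x ∈ LinearMap.ker cou, ∃ n, redIter k one com n x = 0

end Red

/-- `m_A^{[n]} ∘ f^{⊗n} : H^{⊗n} → A`. -/
def prodPow {H : Type*} [AddCommGroup H] [Module k H] (A : Type*) [Ring A] [Algebra k A]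
    (f : H →ₗ[k] A) (n : ℕ) : (⨂[k]^n H) →ₗ[k] A :=
  PiTensorProduct.lift ((MultilinearMap.mkPiAlgebraFin k n A).compLinearMap fun _ => f)


/-- A model of the quasi-shuffle Hopf algebra `QSh(A) = ⊕_{n≥0} A^{⊗n}` over a
(possibly non-unital) associative algebra `A`: `emp` is the empty word, `cons` is
prepending of a letter, `mul` is the quasi-shuffle product `⧢`, `comul` the
deconcatenation coproduct and `counit` the counit. -/
structure QShModel (A Q : Type*) [NonUnitalRing A] [Module k A]
    [SMulCommClass k A A] [IsScalarTower k A A] [AddCommGroup Q] [Module k Q] where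
  emp : Q
  cons : A →ₗ[k] Q →ₗ[k] Q
  mul : Q →ₗ[k] Q →ₗ[k] Q
  comul : Q →ₗ[k] Q ⊗[k] Q
  counit : Q →ₗ[k] k
  /-- words span `QSh(A)` -/
  span_words : Submodule.span k
    (Set.range fun w : List A => w.foldr (fun a u => cons a u) emp) = ⊤
  /-- `QSh(A) ≅ k ⊕ (A ⊗ QSh(A))` via `(c, a ⊗ u) ↦ c • 1 + a·u` -/
  theta_bij : Function.Bijective
    ((LinearMap.toSpanSingleton k Q emp).coprod (TensorProduct.lift cons))
  mul_emp_left : ∀ u, mul emp u = u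
  mul_emp_right : ∀ u, mul u emp = u
  /-- the quasi-shuffle recursion `av ⧢ bw = a(v ⧢ bw) + b(av ⧢ w) + (a·_A b)(v ⧢ w)` -/
  mul_cons : ∀ (a b : A) (v w : Q),
    mul (cons a v) (cons b w) =
      cons a (mul v (cons b w)) + cons b (mul (cons a v) w) + cons (a * b) (mul v w)
  comul_emp : comul emp = emp ⊗ₜ[k] emp
  /-- the deconcatenation recursion -/
  comul_cons : ∀ (a : A) (u : Q),
    comul (cons a u) = emp ⊗ₜ[k] (cons a u) + (TensorProduct.map (cons a) LinearMap.id) (comul u)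
  counit_emp : counit emp = 1
  counit_cons : ∀ (a : A) (u : Q), counit (cons a u) = 0

namespace QShModel

variable {k}
variable {A Q : Type*} [NonUnitalRing A] [Module k A]
    [SMulCommClass k A A] [IsScalarTower k A A] [AddCommGroup Q] [Module k Q]

/-- The word `a_1…a_n ∈ QSh(A)`. -/
def ofWord (M : QShModel k A Q) (w : List A) : Q := w.foldr (fun a u => M.cons a u) M.emp

/-- The collapse `H^{⊗(n+1)} → QSh(A)`, `x_1 ⊗ … ⊗ x_{n+1} ↦ c(x_1)…c(x_{n+1})`
(a word of length `n+1`) induced by a linear map `c : H → A`. -/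
def wordMap (M : QShModel k A Q) {H : Type*} [AddCommGroup H] [Module k H]
    (c : H →ₗ[k] A) : (n : ℕ) → (⨂[k]^(n+1) H) →ₗ[k] Q
  | 0 => ((M.cons ∘ₗ c).flip M.emp) ∘ₗ (toPow1 k).symm.toLinearMap
  | n + 1 =>
      TensorProduct.lift (M.cons ∘ₗ c) ∘ₗ
        TensorProduct.map (toPow1 k).symm.toLinearMap (M.wordMap c n) ∘ₗ
          (TensorPower.mulEquiv (R := k) (M := H) (n := 1) (m := n+1)).symm.toLinearMap ∘ₗ
            (TensorPower.cast k H (show n+1+1 = 1+(n+1) by omega)).toLinearMap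

/-- `Ψ = QSh(c) ∘ ι : H → QSh(A)`, i.e. `Ψ(1) = 1` and, for `h` in the kernel of the
counit, `Ψ(h) = Σ_{n≥1} c^{⊗n}(Δ'^{[n]}(h))` (a finite sum, each term being viewed
as a word of length `n`). -/
def IotaComp (M : QShModel k A Q) {H : Type*} [AddCommGroup H] [Module k H]
    (oneH : H) (com : H →ₗ[k] H ⊗[k] H) (cou : H →ₗ[k] k)
    (c : H →ₗ[k] A) (Ψ : H →ₗ[k] Q) : Prop :=
  Ψ oneH = M.emp ∧
    ∀ h ∈ LinearMap.ker cou, ∃ N, ∀ n ≥ N,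
      Ψ h = ∑ i ∈ Finset.range (n+1), M.wordMap c i (redIter k oneH com i h)

end QShModel
end QShPaper

lemma LinearMap.lTensor_rTensor_comm {R M₁ M₂ N₁ N₂ : Type*} [CommSemiring R]
    [AddCommMonoid M₁] [Module R M₁] [AddCommMonoid M₂] [Module R M₂] [AddCommMonoid N₁]
    [Module R N₁] [AddCommMonoid N₂] [Module R N₂] (f : M₁ →ₗ[R] M₂) (g : N₁ →ₗ[R] N₂)
    (t : M₁ ⊗[R] N₁) : g.lTensor M₂ (f.rTensor N₁ t) = f.rTensor N₂ (g.lTensor M₁ t) := by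
  rw [← LinearMap.comp_apply, ← LinearMap.comp_apply, LinearMap.lTensor_comp_rTensor,
    LinearMap.rTensor_comp_lTensor]

namespace QShPaper.QShModel

variable {k : Type*} [Field k] {A Q : Type*} [NonUnitalRing A] [Module k A]
    [SMulCommClass k A A] [IsScalarTower k A A] [AddCommGroup Q] [Module k Q]
    (M : QShModel k A Q)

@[simp] lemma ofWord_nil : M.ofWord [] = M.emp := rfl

@[simp] lemma ofWord_cons (a : A) (w : List A) : M.ofWord (a :: w) = M.cons a (M.ofWord w) :=
  rfl

lemma span_range_ofWord : Submodule.span k (Set.range M.ofWord) = ⊤ := M.span_words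

lemma ext_ofWord {X : Type*} [AddCommGroup X] [Module k X] {F G : Q →ₗ[k] X}
    (h : ∀ w : List A, F (M.ofWord w) = G (M.ofWord w)) : F = G :=
  LinearMap.ext_on M.span_range_ofWord (Set.forall_mem_range.2 h)

lemma ext_ofWord₂ {X : Type*} [AddCommGroup X] [Module k X] {F G : Q →ₗ[k] Q →ₗ[k] X}
    (h : ∀ v w : List A, F (M.ofWord v) (M.ofWord w) = G (M.ofWord v) (M.ofWord w)) :
    F = G :=
  M.ext_ofWord fun v => M.ext_ofWord fun w => h v w

section Product

theorem mul_assoc_ofWord : ∀ u v w : List A,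
    M.mul (M.mul (M.ofWord u) (M.ofWord v)) (M.ofWord w) =
      M.mul (M.ofWord u) (M.mul (M.ofWord v) (M.ofWord w))
  | [], v, w => by simp [M.mul_emp_left]
  | a :: u, [], w => by simp [M.mul_emp_left, M.mul_emp_right]
  | a :: u, b :: v, [] => by simp [M.mul_emp_right]
  | a :: u, b :: v, c :: w => by
    have e₁ := mul_assoc_ofWord u (b :: v) (c :: w)
    have e₂ := mul_assoc_ofWord (a :: u) (b :: v) w
    have e₃ := mul_assoc_ofWord (a :: u) v (c :: w)
    have e₄ := mul_assoc_ofWord u v (c :: w)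
    have e₅ := mul_assoc_ofWord u (b :: v) w
    have e₆ := mul_assoc_ofWord (a :: u) v w
    have e₇ := mul_assoc_ofWord u v w
    simp only [ofWord_cons] at e₁ e₂ e₃ e₄ e₅ e₆ e₇ ⊢
    simp only [M.mul_cons, map_add, LinearMap.add_apply]
    rw [e₁, e₃, e₄, e₅, e₆, e₇, ← e₂]
    simp only [M.mul_cons, map_add, LinearMap.add_apply, mul_assoc]
    abel
termination_by u v w => u.length + v.length + w.length

theorem mul_assoc (u v w : Q) : M.mul (M.mul u v) w = M.mul u (M.mul v w) := by
  have h : M.mul.compr₂ M.mul = (LinearMap.llcomp k Q Q Q ∘ₗ M.mul).compl₂ M.mul :=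
    M.ext_ofWord₂ fun u v => M.ext_ofWord fun w => M.mul_assoc_ofWord u v w
  exact LinearMap.congr_fun (LinearMap.congr_fun (LinearMap.congr_fun h u) v) w

theorem mul_comm_ofWord (hA : ∀ a b : A, a * b = b * a) : ∀ u v : List A,
    M.mul (M.ofWord u) (M.ofWord v) = M.mul (M.ofWord v) (M.ofWord u)
  | [], v => by simp [M.mul_emp_left, M.mul_emp_right]
  | a :: u, [] => by simp [M.mul_emp_left, M.mul_emp_right]
  | a :: u, b :: v => by
    have e₁ := mul_comm_ofWord hA u (b :: v)
    have e₂ := mul_comm_ofWord hA (a :: u) v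
    have e₃ := mul_comm_ofWord hA u v
    simp only [ofWord_cons] at e₁ e₂ e₃ ⊢
    rw [M.mul_cons, M.mul_cons, e₁, e₂, e₃, hA a b]
    abel
termination_by u v => u.length + v.length

theorem mul_comm (hA : ∀ a b : A, a * b = b * a) (u v : Q) : M.mul u v = M.mul v u := by
  have h : M.mul = M.mul.flip := M.ext_ofWord₂ (M.mul_comm_ofWord hA)
  exact LinearMap.congr_fun (LinearMap.congr_fun h u) v

end Product

section Counit

lemma counit_comp_cons (a : A) : M.counit ∘ₗ M.cons a = 0 :=
  LinearMap.ext (M.counit_cons a)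

lemma counit_ofWord_of_ne_nil {w : List A} (hw : w ≠ []) : M.counit (M.ofWord w) = 0 := by
  obtain ⟨a, w, rfl⟩ := List.exists_cons_of_ne_nil hw
  exact M.counit_cons a _

theorem counit_mul_ofWord : ∀ u v : List A,
    M.counit (M.mul (M.ofWord u) (M.ofWord v)) = M.counit (M.ofWord u) * M.counit (M.ofWord v)
  | [], v => by simp [M.mul_emp_left, M.counit_emp]
  | a :: u, [] => by simp [M.mul_emp_right, M.counit_emp]
  | a :: u, b :: v => by simp [M.mul_cons, M.counit_cons]

theorem counit_mul (u v : Q) : M.counit (M.mul u v) = M.counit u * M.counit v := by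
  have h : M.mul.compr₂ M.counit = (LinearMap.mul k k ∘ₗ M.counit).compl₂ M.counit :=
    M.ext_ofWord₂ M.counit_mul_ofWord
  exact LinearMap.congr_fun (LinearMap.congr_fun h u) v

end Counit

section Coalgebra

lemma comul_cons_eq (a : A) (u : Q) :
    M.comul (M.cons a u) = M.emp ⊗ₜ M.cons a u + (M.cons a).rTensor Q (M.comul u) :=
  M.comul_cons a u

lemma counit_rTensor_rTensor_cons (a : A) (t : Q ⊗[k] Q) :
    M.counit.rTensor Q ((M.cons a).rTensor Q t) = 0 := by
  rw [← LinearMap.rTensor_comp_apply, M.counit_comp_cons, LinearMap.rTensor_zero,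
    LinearMap.zero_apply]

theorem counit_rTensor_comul : M.counit.rTensor Q ∘ₗ M.comul = TensorProduct.mk k k Q 1 :=
  M.ext_ofWord fun
    | [] => by simp [M.comul_emp, M.counit_emp]
    | a :: w => by simp [M.comul_cons_eq, M.counit_rTensor_rTensor_cons, M.counit_emp]

theorem counit_lTensor_comul :
    M.counit.lTensor Q ∘ₗ M.comul = (TensorProduct.mk k Q k).flip 1 := by
  refine M.ext_ofWord fun w => ?_
  induction w with
  | nil => simp [M.comul_emp, M.counit_emp]
  | cons a w ih =>
    simp only [LinearMap.comp_apply, LinearMap.flip_apply, TensorProduct.mk_apply] at ih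
    simp [M.comul_cons_eq, LinearMap.lTensor_rTensor_comm, ih, M.counit_cons]

lemma assoc_rTensor_comul_rTensor_cons (a : A) (t : Q ⊗[k] Q) :
    TensorProduct.assoc k Q Q Q (M.comul.rTensor Q ((M.cons a).rTensor Q t)) =
      M.emp ⊗ₜ (M.cons a).rTensor Q t +
        (M.cons a).rTensor (Q ⊗[k] Q) (TensorProduct.assoc k Q Q Q (M.comul.rTensor Q t)) := by
  induction t using TensorProduct.induction_on with
  | zero => simp
  | tmul x y =>
    simp [M.comul_cons_eq, TensorProduct.add_tmul, LinearMap.rTensor_tensor]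
  | add s t hs ht =>
    simp only [map_add, hs, ht, TensorProduct.tmul_add]
    abel

theorem coassoc :
    TensorProduct.assoc k Q Q Q ∘ₗ M.comul.rTensor Q ∘ₗ M.comul =
      M.comul.lTensor Q ∘ₗ M.comul := by
  refine M.ext_ofWord fun w => ?_
  induction w with
  | nil => simp [M.comul_emp]
  | cons a w ih =>
    simp only [LinearMap.comp_apply, LinearEquiv.coe_coe] at ih
    simp only [LinearMap.comp_apply, LinearEquiv.coe_coe, ofWord_cons, M.comul_cons_eq, map_add,
      LinearMap.rTensor_tmul, LinearMap.lTensor_tmul, M.comul_emp, TensorProduct.assoc_tmul,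
      M.assoc_rTensor_comul_rTensor_cons, ih, TensorProduct.tmul_add]
    rw [LinearMap.lTensor_rTensor_comm]
    abel

end Coalgebra

section Bialgebra

def tensorMul : (Q ⊗[k] Q) →ₗ[k] (Q ⊗[k] Q) →ₗ[k] (Q ⊗[k] Q) :=
  TensorProduct.homTensorHomMap (RingHom.id k) Q Q Q Q ∘ₗ TensorProduct.map M.mul M.mul

@[simp] lemma tensorMul_tmul_tmul (x y x' y' : Q) :
    M.tensorMul (x ⊗ₜ y) (x' ⊗ₜ y') = M.mul x x' ⊗ₜ M.mul y y' := by
  simp [tensorMul, TensorProduct.homTensorHomMap_apply]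

lemma tensorMul_emp_tmul_emp_left (t : Q ⊗[k] Q) : M.tensorMul (M.emp ⊗ₜ M.emp) t = t := by
  induction t using TensorProduct.induction_on with
  | zero => simp
  | tmul x y => simp [M.mul_emp_left]
  | add s t hs ht => simp [hs, ht]

lemma tensorMul_emp_tmul_emp_right (t : Q ⊗[k] Q) : M.tensorMul t (M.emp ⊗ₜ M.emp) = t := by
  induction t using TensorProduct.induction_on with
  | zero => simp
  | tmul x y => simp [M.mul_emp_right]
  | add s t hs ht => simp [hs, ht]

lemma rTensor_cons_tensorMul_emp_tmul (a : A) (p : Q) (t : Q ⊗[k] Q) :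
    (M.cons a).rTensor Q (M.tensorMul t (M.emp ⊗ₜ p)) =
      M.tensorMul ((M.cons a).rTensor Q t) (M.emp ⊗ₜ p) := by
  induction t using TensorProduct.induction_on with
  | zero => simp
  | tmul x y => simp [M.mul_emp_right]
  | add s t hs ht => simp [hs, ht]

lemma rTensor_cons_emp_tmul_tensorMul (b : A) (p : Q) (s : Q ⊗[k] Q) :
    (M.cons b).rTensor Q (M.tensorMul (M.emp ⊗ₜ p) s) =
      M.tensorMul (M.emp ⊗ₜ p) ((M.cons b).rTensor Q s) := by
  induction s using TensorProduct.induction_on with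
  | zero => simp
  | tmul x y => simp [M.mul_emp_left]
  | add s t hs ht => simp [hs, ht]

lemma tensorMul_rTensor_cons (a b : A) (t s : Q ⊗[k] Q) :
    M.tensorMul ((M.cons a).rTensor Q t) ((M.cons b).rTensor Q s) =
      (M.cons a).rTensor Q (M.tensorMul t ((M.cons b).rTensor Q s)) +
        (M.cons b).rTensor Q (M.tensorMul ((M.cons a).rTensor Q t) s) +
          (M.cons (a * b)).rTensor Q (M.tensorMul t s) := by
  induction t using TensorProduct.induction_on with
  | zero => simp
  | tmul x y =>
    induction s using TensorProduct.induction_on with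
    | zero => simp
    | tmul x' y' => simp [M.mul_cons, TensorProduct.add_tmul]
    | add s₁ s₂ h₁ h₂ =>
      simp only [map_add, h₁, h₂]
      abel
  | add t₁ t₂ h₁ h₂ =>
    simp only [map_add, LinearMap.add_apply, h₁, h₂]
    abel

theorem comul_mul_ofWord : ∀ u v : List A,
    M.comul (M.mul (M.ofWord u) (M.ofWord v)) =
      M.tensorMul (M.comul (M.ofWord u)) (M.comul (M.ofWord v))
  | [], v => by simp [M.mul_emp_left, M.comul_emp, M.tensorMul_emp_tmul_emp_left]
  | a :: u, [] => by simp [M.mul_emp_right, M.comul_emp, M.tensorMul_emp_tmul_emp_right]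
  | a :: u, b :: v => by
    have e₁ := comul_mul_ofWord u (b :: v)
    have e₂ := comul_mul_ofWord (a :: u) v
    have e₃ := comul_mul_ofWord u v
    simp only [ofWord_cons, M.comul_cons_eq, map_add, LinearMap.add_apply] at e₁ e₂ e₃ ⊢
    rw [M.mul_cons]
    simp only [map_add, M.comul_cons_eq, e₁, e₂, e₃, M.tensorMul_tmul_tmul, M.mul_emp_left,
      M.mul_cons, TensorProduct.tmul_add, M.tensorMul_rTensor_cons,
      M.rTensor_cons_tensorMul_emp_tmul, M.rTensor_cons_emp_tmul_tensorMul]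
    abel
termination_by u v => u.length + v.length

theorem comul_mul (u v : Q) :
    M.comul (M.mul u v) = M.tensorMul (M.comul u) (M.comul v) := by
  have h : M.mul.compr₂ M.comul = (M.tensorMul ∘ₗ M.comul).compl₂ M.comul :=
    M.ext_ofWord₂ M.comul_mul_ofWord
  exact LinearMap.congr_fun (LinearMap.congr_fun h u) v

end Bialgebra

section Conilpotency

lemma comul_ofWord (w : List A) :
    M.comul (M.ofWord w) =
      ∑ r ∈ Finset.range (w.length + 1), M.ofWord (w.take r) ⊗ₜ M.ofWord (w.drop r) := by
  induction w with
  | nil => simp [M.comul_emp]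
  | cons a w ih =>
    rw [ofWord_cons, M.comul_cons_eq, ih, map_sum, List.length_cons,
      Finset.sum_range_succ' _ (w.length + 1)]
    simp only [LinearMap.rTensor_tmul, List.take_succ_cons, List.drop_succ_cons, List.take_zero,
      List.drop_zero, ofWord_cons, ofWord_nil]
    abel

lemma redComul_ofWord_cons (a : A) (w : List A) :
    redComul k M.emp M.comul (M.ofWord (a :: w)) =
      ∑ r ∈ Finset.range w.length, M.ofWord (a :: w.take r) ⊗ₜ M.ofWord (w.drop r) := by
  rw [redComul, LinearMap.sub_apply, LinearMap.sub_apply, comul_ofWord, List.length_cons,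
    Finset.sum_range_succ, Finset.sum_range_succ']
  simp only [List.take_succ_cons, ofWord_cons, List.drop_succ_cons, List.take_zero, ofWord_nil,
    List.drop_zero, List.take_length, List.drop_length, TensorProduct.mk_apply,
    LinearMap.flip_apply]
  abel

lemma redIter_ofWord (n : ℕ) {w : List A} (hw : w ≠ []) (hn : w.length ≤ n) :
    redIter k M.emp M.comul n (M.ofWord w) = 0 := by
  induction n generalizing w with
  | zero => exact absurd (List.length_eq_zero_iff.mp (Nat.le_zero.mp hn)) hw
  | succ n ih =>
    obtain ⟨a, w, rfl⟩ := List.exists_cons_of_ne_nil hw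
    have hred : TensorProduct.map (toPow1 k).toLinearMap (redIter k M.emp M.comul n)
        (redComul k M.emp M.comul (M.ofWord (a :: w))) = 0 := by
      rw [redComul_ofWord_cons, map_sum]
      refine Finset.sum_eq_zero fun r hr => ?_
      have hr : r < w.length := Finset.mem_range.mp hr
      have hne : w.drop r ≠ [] := by simpa [List.drop_eq_nil_iff] using hr
      have hlen : (w.drop r).length ≤ n := by
        simp only [List.length_drop, List.length_cons] at hn ⊢
        omega
      rw [TensorProduct.map_tmul, ih hne hlen, TensorProduct.tmul_zero]
    simp only [redIter, LinearMap.comp_apply, hred, map_zero]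

lemma ker_counit_le_span_ofWord :
    LinearMap.ker M.counit ≤ Submodule.span k (M.ofWord '' {w | w ≠ []}) := by
  intro x hx
  set p : Q →ₗ[k] Q := LinearMap.id - LinearMap.toSpanSingleton k Q M.emp ∘ₗ M.counit
  have hpx : p x = x := by simp [p, LinearMap.mem_ker.mp hx]
  have hp : Submodule.map p ⊤ ≤ Submodule.span k (M.ofWord '' {w | w ≠ []}) := by
    rw [← M.span_range_ofWord, Submodule.map_span, Submodule.span_le]
    rintro _ ⟨_, ⟨w, rfl⟩, rfl⟩
    rcases eq_or_ne w [] with rfl | hw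
    · simp [p, M.counit_emp]
    · simpa [p, M.counit_ofWord_of_ne_nil hw] using
        Submodule.subset_span (Set.mem_image_of_mem M.ofWord hw)
  exact hp (hpx ▸ Submodule.mem_map_of_mem trivial)

theorem isConilpotent : IsConilpotent k M.emp M.comul M.counit := by
  intro x hx
  -- vanishing from some level on, unlike vanishing at one level, is stable under sums
  suffices ∃ N, ∀ n ≥ N, redIter k M.emp M.comul n x = 0 from this.imp fun N h => h N le_rfl
  replace hx := M.ker_counit_le_span_ofWord hx
  induction hx using Submodule.span_induction with
  | mem _ h =>
    obtain ⟨w, hw, rfl⟩ := h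
    exact ⟨w.length, fun n hn => M.redIter_ofWord n hw hn⟩
  | zero => exact ⟨0, fun n _ => map_zero _⟩
  | add x y _ _ hx hy =>
    obtain ⟨N, hN⟩ := hx
    obtain ⟨N', hN'⟩ := hy
    refine ⟨max N N', fun n hn => ?_⟩
    rw [map_add, hN n (le_of_max_le_left hn), hN' n (le_of_max_le_right hn), add_zero]
  | smul c x _ hx => exact hx.imp fun N h n hn => by rw [map_smul, h n hn, smul_zero]

end Conilpotency

end QShPaper.QShModel

open QShPaper in
theorem stmt7_qsh_is_conilpotent_bialgebra_general
    (k : Type*) [Field k]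
    (A : Type*) [NonUnitalRing A] [Module k A] [SMulCommClass k A A] [IsScalarTower k A A]
    (Q : Type*) [AddCommGroup Q] [Module k Q]
    (M : QShModel k A Q) :
    -- `⧢` is associative, with unit the empty word
    (∀ u v w : Q, M.mul (M.mul u v) w = M.mul u (M.mul v w)) ∧
    (∀ u : Q, M.mul M.emp u = u ∧ M.mul u M.emp = u) ∧
    -- the deconcatenation coproduct is coassociative, with counit `η`
    (TensorProduct.assoc k Q Q Q ∘ₗ M.comul.rTensor Q ∘ₗ M.comul =
      M.comul.lTensor Q ∘ₗ M.comul) ∧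
    (M.counit.rTensor Q ∘ₗ M.comul = TensorProduct.mk k k Q 1) ∧
    (M.counit.lTensor Q ∘ₗ M.comul = (TensorProduct.mk k Q k).flip 1) ∧
    -- the coproduct is a morphism of algebras for `⧢`
    (∀ u v : Q, M.comul (M.mul u v) =
      ((TensorProduct.homTensorHomMap (RingHom.id k) Q Q Q Q ∘ₗ TensorProduct.map M.mul M.mul)
        (M.comul u)) (M.comul v)) ∧
    (M.comul M.emp = M.emp ⊗ₜ[k] M.emp) ∧
    -- the counit is a morphism of algebras
    (∀ u v : Q, M.counit (M.mul u v) = M.counit u * M.counit v) ∧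
    (M.counit M.emp = 1) ∧
    -- `QSh(A)` is conilpotent
    (IsConilpotent k M.emp M.comul M.counit) ∧
    -- if `A` is commutative then so is `⧢`
    ((∀ a b : A, a * b = b * a) → ∀ u v : Q, M.mul u v = M.mul v u) :=
  ⟨M.mul_assoc, fun u => ⟨M.mul_emp_left u, M.mul_emp_right u⟩, M.coassoc,
    M.counit_rTensor_comul, M.counit_lTensor_comul, M.comul_mul, M.comul_emp, M.counit_mul,
    M.counit_emp, M.isConilpotent, M.mul_comm⟩

open QShPaper in
/-- For an associative algebra `A`, the quasi-shuffle product `⧢` and the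
deconcatenation coproduct make `QSh(A) = ⊕_{n≥0} A^{⊗n}` a conilpotent unital bialgebra
(hence a Hopf algebra): `⧢` is associative with unit the empty word, `Δ` is coassociative
with counit `η`, `Δ` and `η` are algebra morphisms for `⧢`, and the reduced coproduct is
locally conilpotent; moreover `⧢` is commutative whenever `A` is. -/
theorem stmt7_qsh_is_conilpotent_bialgebra
    (k : Type*) [Field k] [CharZero k]
    (A : Type*) [NonUnitalRing A] [Module k A] [SMulCommClass k A A] [IsScalarTower k A A]
    (Q : Type*) [AddCommGroup Q] [Module k Q]
    (M : QShModel k A Q) :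
    -- `⧢` is associative, with unit the empty word
    (∀ u v w : Q, M.mul (M.mul u v) w = M.mul u (M.mul v w)) ∧
    (∀ u : Q, M.mul M.emp u = u ∧ M.mul u M.emp = u) ∧
    -- the deconcatenation coproduct is coassociative, with counit `η`
    (TensorProduct.assoc k Q Q Q ∘ₗ M.comul.rTensor Q ∘ₗ M.comul =
      M.comul.lTensor Q ∘ₗ M.comul) ∧
    (M.counit.rTensor Q ∘ₗ M.comul = TensorProduct.mk k k Q 1) ∧
    (M.counit.lTensor Q ∘ₗ M.comul = (TensorProduct.mk k Q k).flip 1) ∧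
    -- the coproduct is a morphism of algebras for `⧢`
    (∀ u v : Q, M.comul (M.mul u v) =
      ((TensorProduct.homTensorHomMap (RingHom.id k) Q Q Q Q ∘ₗ TensorProduct.map M.mul M.mul)
        (M.comul u)) (M.comul v)) ∧
    (M.comul M.emp = M.emp ⊗ₜ[k] M.emp) ∧
    -- the counit is a morphism of algebras
    (∀ u v : Q, M.counit (M.mul u v) = M.counit u * M.counit v) ∧
    (M.counit M.emp = 1) ∧
    -- `QSh(A)` is conilpotent
    (IsConilpotent k M.emp M.comul M.counit) ∧
    -- if `A` is commutative then so is `⧢`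
    ((∀ a b : A, a * b = b * a) → ∀ u v : Q, M.mul u v = M.mul v u) :=
  stmt7_qsh_is_conilpotent_bialgebra_general k A Q M
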